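/- arXiv:math/0205028 — 2 statements merged into one kernel-verified Lean document; each statement's English description precedes it below -/
import Mathlib

section
/- Let m = 2, M_1 = [[2,0],[0,1]] and M_2 = [[2,0],[0,3]]. Then for every q > 0 the limit P(q) = lim_{n→∞} (1/n) log Σ_{J∈Σ_n} ‖M_J‖^q exists and equals max{ (q+1)·log 2, log(1 + 3^q) }; in particular, the function P is not differentiable at q = 1. -/
open Filter MeasureTheory
open scoped Classical BigOperators Topology ENNReal

/-- `‖B‖ = 1ᵗ B 1`, the sum of all entries of `B`. -/
def matNorm {d : ℕ} (B : Matrix (Fin d) (Fin d) ℝ) : ℝ := ∑ i, ∑ j, B i j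

/-- The matrix product `M_J = M_{j_1} ⋯ M_{j_n}` of a word `J = j_1 ⋯ j_n`. -/
noncomputable def MprodW {m d : ℕ} (M : Fin m → Matrix (Fin d) (Fin d) ℝ)
    {n : ℕ} (J : Fin n → Fin m) : Matrix (Fin d) (Fin d) ℝ :=
  ((List.ofFn J).map M).prod

section Aux
open Set

lemma prodW_eq : ∀ (n : ℕ) (J : Fin n → Fin 2),
    MprodW (![!![2, 0; 0, 1], !![2, 0; 0, 3]]) J
      = !![(2:ℝ)^n, 0; 0, ∏ i, ![(1:ℝ),3] (J i)] := by
  intro n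
  induction n with
  | zero => intro J; simp [MprodW, Matrix.one_fin_two]
  | succ n ih =>
    intro J
    have : MprodW (![!![2, 0; 0, 1], !![2, 0; 0, 3]]) J
        = (![!![(2:ℝ), 0; 0, 1], !![2, 0; 0, 3]]) (J 0)
          * MprodW (![!![2, 0; 0, 1], !![2, 0; 0, 3]]) (fun i : Fin n => J i.succ) := by
      simp [MprodW, List.ofFn_succ]
    rw [this, ih, Fin.prod_univ_succ]
    have h0 : (J 0 = 0) ∨ (J 0 = 1) := by omega
    rcases h0 with h | h <;> rw [h] <;>
      simp [Matrix.mul_fin_two, pow_succ] <;> ring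

lemma norm_eq (n : ℕ) (J : Fin n → Fin 2) :
    matNorm (MprodW (![!![2, 0; 0, 1], !![2, 0; 0, 3]]) J)
      = (2:ℝ)^n + ∏ i, ![(1:ℝ),3] (J i) := by
  rw [prodW_eq, matNorm]
  simp [Fin.sum_univ_two]

lemma prodP_pos (n : ℕ) (J : Fin n → Fin 2) : (0:ℝ) < ∏ i, ![(1:ℝ),3] (J i) := by
  apply Finset.prod_pos
  intro i _
  have : (J i = 0) ∨ (J i = 1) := by omega
  rcases this with h | h <;> simp [h]

lemma sum_P_rpow (n : ℕ) (q : ℝ) :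
    ∑ J : Fin n → Fin 2, (∏ i, ![(1:ℝ),3] (J i)) ^ q = (1 + (3:ℝ)^q)^n := by
  have h1 : ∀ J : Fin n → Fin 2, (∏ i, ![(1:ℝ),3] (J i)) ^ q
      = ∏ i, (![(1:ℝ),3] (J i)) ^ q := by
    intro J
    rw [← Real.finset_prod_rpow]
    intro i _
    have : (J i = 0) ∨ (J i = 1) := by omega
    rcases this with h | h <;> simp [h]
  simp_rw [h1]
  have := Finset.prod_univ_sum (fun _ : Fin n => (Finset.univ : Finset (Fin 2)))
    (fun _ j => (![(1:ℝ),3] j) ^ q)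
  rw [Fintype.piFinset_univ] at this
  rw [← this]
  simp [Fin.sum_univ_two, Real.one_rpow]

lemma sum_const_rpow (q : ℝ) (n : ℕ) :
    ∑ J : Fin n → Fin 2, ((2:ℝ)^n)^q = ((2:ℝ)^(q+1))^n := by
  rw [Finset.sum_const, Finset.card_univ, nsmul_eq_mul]
  simp only [Fintype.card_fun, Fintype.card_fin]
  push_cast
  rw [← Real.rpow_natCast (2:ℝ) n, ← Real.rpow_natCast ((2:ℝ)^(q+1)) n,
    ← Real.rpow_mul (by norm_num : (0:ℝ) ≤ 2),
    ← Real.rpow_mul (by norm_num : (0:ℝ) ≤ 2),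
    ← Real.rpow_add (by norm_num : (0:ℝ) < 2)]
  ring_nf

lemma pressure_part (q : ℝ) (hq : 0 < q) :
    Tendsto (fun n : ℕ => (1 / (n : ℝ)) *
        Real.log (∑ J : Fin n → Fin 2,
          matNorm (MprodW (![!![2, 0; 0, 1], !![2, 0; 0, 3]]) J) ^ q))
      atTop (𝓝 (max ((q + 1) * Real.log 2) (Real.log (1 + (3:ℝ) ^ q)))) := by
  set A : ℝ := (2:ℝ)^(q+1) with hAdef
  set B : ℝ := 1 + (3:ℝ)^q with hBdef
  have hA : (0:ℝ) < A := Real.rpow_pos_of_pos (by norm_num) _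
  have hB : (0:ℝ) < B := by positivity
  set C : ℝ := max A B with hCdef
  have hC : (0:ℝ) < C := lt_max_of_lt_left hA
  set S : ℕ → ℝ := fun n => ∑ J : Fin n → Fin 2,
      ((2:ℝ)^n + ∏ i, ![(1:ℝ),3] (J i)) ^ q with hSdef
  have hfun : ∀ n : ℕ, (∑ J : Fin n → Fin 2,
      matNorm (MprodW (![!![2, 0; 0, 1], !![2, 0; 0, 3]]) J) ^ q) = S n := by
    intro n; apply Finset.sum_congr rfl; intro J _; rw [norm_eq]
  -- lower bound 1
  have low1 : ∀ n : ℕ, A ^ n ≤ S n := by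
    intro n
    rw [← sum_const_rpow q n]
    apply Finset.sum_le_sum
    intro J _
    exact Real.rpow_le_rpow (by positivity)
      (le_add_of_nonneg_right (prodP_pos n J).le) hq.le
  have low2 : ∀ n : ℕ, B ^ n ≤ S n := by
    intro n
    rw [hBdef, ← sum_P_rpow n q]
    apply Finset.sum_le_sum
    intro J _
    exact Real.rpow_le_rpow (prodP_pos n J).le
      (le_add_of_nonneg_left (by positivity)) hq.le
  have low : ∀ n : ℕ, C ^ n ≤ S n := by
    intro n
    rcases max_cases A B with ⟨h, _⟩ | ⟨h, _⟩
    · rw [hCdef, h]; exact low1 n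
    · rw [hCdef, h]; exact low2 n
  -- upper bound
  set D : ℝ := (2:ℝ)^q * 2 with hDdef
  have hD : (0:ℝ) < D := by positivity
  have up : ∀ n : ℕ, S n ≤ D * C ^ n := by
    intro n
    have step : ∀ J : Fin n → Fin 2,
        ((2:ℝ)^n + ∏ i, ![(1:ℝ),3] (J i)) ^ q
          ≤ (2:ℝ)^q * (((2:ℝ)^n)^q + (∏ i, ![(1:ℝ),3] (J i))^q) := by
      intro J
      set a : ℝ := (2:ℝ)^n with ha
      set b : ℝ := ∏ i, ![(1:ℝ),3] (J i) with hb
      have hapos : (0:ℝ) < a := by positivity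
      have hbpos : (0:ℝ) < b := prodP_pos n J
      have h1 : a + b ≤ 2 * max a b := by
        rcases max_cases a b with ⟨h, h'⟩ | ⟨h, h'⟩ <;> rw [h] <;> linarith
      calc (a + b) ^ q ≤ (2 * max a b) ^ q :=
            Real.rpow_le_rpow (by positivity) h1 hq.le
        _ = (2:ℝ)^q * (max a b) ^ q :=
            Real.mul_rpow (by norm_num) (le_max_of_le_left hapos.le)
        _ ≤ (2:ℝ)^q * (a ^ q + b ^ q) := by
            apply mul_le_mul_of_nonneg_left _ (by positivity)
            rcases max_cases a b with ⟨h, _⟩ | ⟨h, _⟩ <;> rw [h]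
            · exact le_add_of_nonneg_right (by positivity)
            · exact le_add_of_nonneg_left (by positivity)
    calc S n ≤ ∑ J : Fin n → Fin 2,
        (2:ℝ)^q * (((2:ℝ)^n)^q + (∏ i, ![(1:ℝ),3] (J i))^q) :=
          Finset.sum_le_sum (fun J _ => step J)
      _ = (2:ℝ)^q * (A ^ n + B ^ n) := by
          rw [← Finset.mul_sum, Finset.sum_add_distrib, sum_const_rpow q n,
            sum_P_rpow n q]
      _ ≤ (2:ℝ)^q * (C ^ n + C ^ n) := by
          apply mul_le_mul_of_nonneg_left _ (by positivity)
          have := pow_le_pow_left₀ hA.le (le_max_left A B) n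
          have := pow_le_pow_left₀ hB.le (le_max_right A B) n
          linarith
      _ = D * C ^ n := by rw [hDdef]; ring
  have hSpos : ∀ n : ℕ, 0 < S n := fun n =>
    lt_of_lt_of_le (pow_pos hC n) (low n)
  -- logs
  have hlogC : Real.log C = max ((q + 1) * Real.log 2) (Real.log (1 + (3:ℝ) ^ q)) := by
    have hlA : Real.log A = (q + 1) * Real.log 2 := Real.log_rpow (by norm_num) _
    rcases le_total A B with h | h
    · rw [hCdef, max_eq_right h, max_eq_right, hBdef]
      rw [← hlA]
      exact Real.log_le_log hA h
    · rw [hCdef, max_eq_left h, max_eq_left, hlA]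
      rw [← hlA]
      exact Real.log_le_log hB h
  rw [← hlogC]
  -- squeeze
  have hlow : ∀ n : ℕ, (n : ℝ) * Real.log C ≤ Real.log (S n) := by
    intro n
    have := Real.log_le_log (pow_pos hC n) (low n)
    rwa [Real.log_pow] at this
  have hup : ∀ n : ℕ, Real.log (S n) ≤ Real.log D + (n : ℝ) * Real.log C := by
    intro n
    have := Real.log_le_log (hSpos n) (up n)
    rwa [Real.log_mul hD.ne' (pow_pos hC n).ne', Real.log_pow] at this
  have hev : ∀ᶠ n : ℕ in atTop, (1:ℕ) ≤ n := eventually_ge_atTop 1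
  have hDlim : Tendsto (fun n : ℕ => Real.log C + Real.log D * (1 / (n:ℝ)))
      atTop (𝓝 (Real.log C)) := by
    have : Tendsto (fun n : ℕ => Real.log D * (1 / (n:ℝ))) atTop (𝓝 0) := by
      simpa using (tendsto_one_div_atTop_nhds_zero_nat).const_mul (Real.log D)
    simpa using tendsto_const_nhds.add this
  apply tendsto_of_tendsto_of_tendsto_of_le_of_le'
    (tendsto_const_nhds : Tendsto (fun _ : ℕ => Real.log C) atTop (𝓝 (Real.log C)))
    hDlim
  · filter_upwards [hev] with n hn
    have hn' : (0:ℝ) < (n:ℝ) := by exact_mod_cast hn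
    rw [hfun n]
    rw [one_div, inv_mul_eq_div, le_div_iff₀ hn']
    have h1 := hlow n
    linarith
  · filter_upwards [hev] with n hn
    have hn' : (0:ℝ) < (n:ℝ) := by exact_mod_cast hn
    rw [hfun n]
    rw [one_div, inv_mul_eq_div, div_le_iff₀ hn']
    have h1 := hup n
    have h2 : (Real.log C + Real.log D * ((n:ℝ))⁻¹) * (n:ℝ)
        = Real.log D + (n:ℝ) * Real.log C := by
      field_simp; ring
    rw [h2]
    linarith

noncomputable def ff : ℝ → ℝ := fun q => (q + 1) * Real.log 2
noncomputable def gg : ℝ → ℝ := fun q => Real.log (1 + (3:ℝ) ^ q)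
noncomputable def hh : ℝ → ℝ := fun q => 1 + (3:ℝ) ^ q - 2 * (2:ℝ) ^ q

lemma d3 (x : ℝ) : HasDerivAt (fun q : ℝ => (3:ℝ)^q) ((3:ℝ)^x * Real.log 3) x :=
  (Real.hasStrictDerivAt_const_rpow (by norm_num) x).hasDerivAt

lemma d2 (x : ℝ) : HasDerivAt (fun q : ℝ => (2:ℝ)^q) ((2:ℝ)^x * Real.log 2) x :=
  (Real.hasStrictDerivAt_const_rpow (by norm_num) x).hasDerivAt

lemma dh : HasDerivAt hh (3 * Real.log 3 - 4 * Real.log 2) 1 := by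
  have := ((d3 1).const_add 1).sub ((d2 1).const_mul 2)
  exact this.congr_deriv (by rw [Real.rpow_one]; ring)

lemma dg : HasDerivAt gg (3 * Real.log 3 / 4) 1 := by
  have h1 : HasDerivAt (fun q : ℝ => 1 + (3:ℝ)^q) (3 * Real.log 3) 1 := by
    simpa [Real.rpow_one] using (d3 1).const_add 1
  have := h1.log (by rw [Real.rpow_one]; norm_num)
  show HasDerivAt (fun q : ℝ => Real.log (1 + (3:ℝ) ^ q)) _ 1
  simpa [gg, Real.rpow_one, show (1:ℝ)+3 = 4 by norm_num] using this

lemma df : HasDerivAt ff (Real.log 2) 1 := by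
  have := ((hasDerivAt_id (1:ℝ)).add_const 1).mul_const (Real.log 2)
  show HasDerivAt (fun q : ℝ => (q + 1) * Real.log 2) _ 1
  simpa [ff] using this

lemma hpos : 0 < 3 * Real.log 3 - 4 * Real.log 2 := by
  have h1 : (3:ℝ) * Real.log 3 = Real.log 27 := by
    rw [show (27:ℝ) = 3^(3:ℕ) by norm_num, Real.log_pow]; push_cast; ring
  have h2 : (4:ℝ) * Real.log 2 = Real.log 16 := by
    rw [show (16:ℝ) = 2^(4:ℕ) by norm_num, Real.log_pow]; push_cast; ring
  rw [h1, h2, sub_pos]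
  exact Real.log_lt_log (by norm_num) (by norm_num)

lemma hh_one : hh 1 = 0 := by
  norm_num [hh, Real.rpow_one]

lemma gg_eq_ff_one : gg 1 = ff 1 := by
  simp only [gg, ff, Real.rpow_one]
  rw [show (1:ℝ)+3 = 4 by norm_num, show (4:ℝ) = 2^(2:ℕ) by norm_num,
    Real.log_pow]
  push_cast; ring

lemma gg_lt_ff {x : ℝ} (hx : hh x < 0) : gg x < ff x := by
  have h3 : (0:ℝ) < 1 + (3:ℝ)^x := by positivity
  have h2 : (1:ℝ) + 3^x < 2 * 2^x := by simpa [hh, sub_neg] using hx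
  have := Real.log_lt_log h3 h2
  rw [Real.log_mul (by norm_num) (Real.rpow_pos_of_pos (by norm_num) x).ne',
    Real.log_rpow (by norm_num)] at this
  simp only [gg, ff]
  linarith

lemma ff_lt_gg {x : ℝ} (hx : 0 < hh x) : ff x < gg x := by
  have h2 : (2:ℝ) * 2^x < 1 + 3^x := by simpa [hh, sub_pos] using hx
  have := Real.log_lt_log (by positivity) h2
  rw [Real.log_mul (by norm_num) (Real.rpow_pos_of_pos (by norm_num) x).ne',
    Real.log_rpow (by norm_num)] at this
  simp only [gg, ff]
  linarith

lemma notdiff : ¬ DifferentiableAt ℝ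
    (fun q : ℝ => max ((q + 1) * Real.log 2) (Real.log (1 + (3:ℝ) ^ q))) 1 := by
  intro hd
  set F : ℝ → ℝ := fun q => max (ff q) (gg q) with hFdef
  have hdF : DifferentiableAt ℝ F 1 := hd
  have hF : HasDerivAt F (deriv F 1) 1 := hdF.hasDerivAt
  have hslope : ∀ᶠ x in 𝓝[≠] (1:ℝ), 0 < slope hh 1 x :=
    (hasDerivAt_iff_tendsto_slope.mp dh).eventually (eventually_gt_nhds hpos)
  have hmonoL : 𝓝[<] (1:ℝ) ≤ 𝓝[≠] (1:ℝ) :=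
    nhdsWithin_mono 1 (fun x hx => ne_of_lt hx)
  have hmonoR : 𝓝[>] (1:ℝ) ≤ 𝓝[≠] (1:ℝ) :=
    nhdsWithin_mono 1 (fun x hx => ne_of_gt hx)
  have hF1 : F 1 = ff 1 := by rw [hFdef]; simp [gg_eq_ff_one]
  -- left
  have hleft : F =ᶠ[𝓝[<] (1:ℝ)] ff := by
    filter_upwards [hslope.filter_mono hmonoL, self_mem_nhdsWithin] with x hx hx1
    have hx1' : x - 1 < 0 := by simpa [sub_neg] using (hx1 : x < 1)
    rw [slope_def_field, hh_one, sub_zero] at hx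
    have hneg : hh x < 0 := by
      by_contra hc
      push_neg at hc
      nlinarith [div_nonpos_of_nonneg_of_nonpos hc hx1'.le]
    exact max_eq_left (gg_lt_ff hneg).le
  have hfw : HasDerivWithinAt ff (deriv F 1) (Iio 1) 1 :=
    (hF.hasDerivWithinAt (s := Iio 1)).congr_of_eventuallyEq hleft.symm hF1.symm
  have hc1 : deriv F 1 = Real.log 2 :=
    (uniqueDiffWithinAt_Iio (1:ℝ)).eq_deriv _ hfw (df.hasDerivWithinAt)
  -- right
  have hF1' : F 1 = gg 1 := by rw [hF1, gg_eq_ff_one]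
  have hright : F =ᶠ[𝓝[>] (1:ℝ)] gg := by
    filter_upwards [hslope.filter_mono hmonoR, self_mem_nhdsWithin] with x hx hx1
    have hx1' : (0:ℝ) < x - 1 := by simpa [sub_pos] using (hx1 : 1 < x)
    rw [slope_def_field, hh_one, sub_zero] at hx
    have hgt : 0 < hh x := by
      by_contra hc
      push_neg at hc
      nlinarith [div_nonpos_of_nonpos_of_nonneg hc hx1'.le]
    exact max_eq_right (ff_lt_gg hgt).le
  have hgw : HasDerivWithinAt gg (deriv F 1) (Ioi 1) 1 :=
    (hF.hasDerivWithinAt (s := Ioi 1)).congr_of_eventuallyEq hright.symm hF1'.symm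
  have hc2 : deriv F 1 = 3 * Real.log 3 / 4 :=
    (uniqueDiffWithinAt_Ioi (1:ℝ)).eq_deriv _ hgw (dg.hasDerivWithinAt)
  rw [hc1] at hc2
  have := hpos
  nlinarith [hc2]

end Aux

/-- Example 3.5: for `M_1 = [[2,0],[0,1]]`, `M_2 = [[2,0],[0,3]]`
(full shift on two symbols), `P(q) = max{(q+1) log 2, log(1+3^q)}` for `q > 0`, and this
function is not differentiable at `q = 1`. -/
theorem example_pressure_not_differentiable :
    (∀ q : ℝ, 0 < q →
      Tendsto (fun n : ℕ => (1 / (n : ℝ)) *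
          Real.log (∑ J : Fin n → Fin 2,
            matNorm (MprodW (![!![2, 0; 0, 1], !![2, 0; 0, 3]]) J) ^ q))
        atTop (𝓝 (max ((q + 1) * Real.log 2) (Real.log (1 + (3:ℝ) ^ q))))) ∧
    ¬ DifferentiableAt ℝ
        (fun q : ℝ => max ((q + 1) * Real.log 2) (Real.log (1 + (3:ℝ) ^ q))) 1 :=
  ⟨pressure_part, notdiff⟩
end

section
/- Let M_1,…,M_m be nonnegative d×d matrices such that H = M_1 + ⋯ + M_m is irreducible (i.e. Σ_{k=1}^r H^k has all entries positive for some r ≥ 1). For n ≥ 1 let 𝒩_n = { J ∈ Σ_n : M_J ≠ 0 }. Then for every q < 0 the limit lim_{n→∞} (1/n) log Σ_{J∈𝒩_n} ‖M_J‖^q exists (as an element of ℝ ∪ {+∞}). -/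
open Filter MeasureTheory
open scoped Classical BigOperators Topology ENNReal

section Aux
variable {m d : ℕ} {M : Fin m → Matrix (Fin d) (Fin d) ℝ}

lemma listprod_nonneg (hnn : ∀ i : Fin m, ∀ a b : Fin d, 0 ≤ M i a b) :
    ∀ L : List (Fin m), ∀ a b : Fin d, 0 ≤ (L.map M).prod a b := by
  intro L
  induction L with
  | nil => intro a b; simp [Matrix.one_apply]; positivity
  | cons i L ih =>
      intro a b
      simp only [List.map_cons, List.prod_cons, Matrix.mul_apply]
      exact Finset.sum_nonneg fun c _ => mul_nonneg (hnn i a c) (ih c b)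

lemma MprodW_nonneg (hnn : ∀ i : Fin m, ∀ a b : Fin d, 0 ≤ M i a b)
    {n : ℕ} (J : Fin n → Fin m) (a b : Fin d) : 0 ≤ MprodW M J a b :=
  listprod_nonneg hnn _ a b

lemma MprodW_append {n l : ℕ} (I : Fin n → Fin m) (J : Fin l → Fin m) :
    MprodW M (Fin.append I J) = MprodW M I * MprodW M J := by
  simp [MprodW, List.ofFn_fin_append]

lemma MprodW_cons {n : ℕ} (i : Fin m) (K : Fin n → Fin m) :
    MprodW M (Fin.cons i K) = M i * MprodW M K := by
  simp [MprodW, List.ofFn_succ]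

lemma MprodW_single (i : Fin m) : MprodW M ![i] = M i := by
  simp [MprodW, List.ofFn_succ]

lemma MprodW_nil (J : Fin 0 → Fin m) : MprodW M J = 1 := by
  simp [MprodW]

lemma matNorm_nonneg {B : Matrix (Fin d) (Fin d) ℝ} (h : ∀ a b, 0 ≤ B a b) :
    0 ≤ matNorm B :=
  Finset.sum_nonneg fun a _ => Finset.sum_nonneg fun b _ => h a b

lemma exists_pos_entry {B : Matrix (Fin d) (Fin d) ℝ} (h : ∀ a b, 0 ≤ B a b)
    (hB : B ≠ 0) : ∃ x a, 0 < B x a := by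
  by_contra hc
  push_neg at hc
  exact hB (by ext x a; exact le_antisymm (hc x a) (h x a))

lemma ne_zero_of_pos_entry {B : Matrix (Fin d) (Fin d) ℝ} {x a : Fin d}
    (h : 0 < B x a) : B ≠ 0 := by
  intro hB; rw [hB] at h; simp at h

lemma matNorm_pos {B : Matrix (Fin d) (Fin d) ℝ} (h : ∀ a b, 0 ≤ B a b)
    (hB : B ≠ 0) : 0 < matNorm B := by
  obtain ⟨x, a, hxa⟩ := exists_pos_entry h hB
  have : 0 < ∑ j, B x j :=
    Finset.sum_pos' (fun b _ => h x b) ⟨a, Finset.mem_univ a, hxa⟩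
  exact Finset.sum_pos' (fun i _ => Finset.sum_nonneg fun b _ => h i b)
    ⟨x, Finset.mem_univ x, this⟩

lemma entry_mul_le {A B : Matrix (Fin d) (Fin d) ℝ}
    (hA : ∀ a b, 0 ≤ A a b) (hB : ∀ a b, 0 ≤ B a b) (x a y : Fin d) :
    A x a * B a y ≤ (A * B) x y := by
  rw [Matrix.mul_apply]
  exact Finset.single_le_sum (fun c _ => mul_nonneg (hA x c) (hB c y))
    (Finset.mem_univ a)

lemma matNorm_mul_le {A B : Matrix (Fin d) (Fin d) ℝ}
    (hA : ∀ a b, 0 ≤ A a b) (hB : ∀ a b, 0 ≤ B a b) :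
    matNorm (A * B) ≤ matNorm A * matNorm B := by
  have h1 : matNorm (A * B) = ∑ x, ∑ c, A x c * ∑ y, B c y := by
    unfold matNorm
    refine Finset.sum_congr rfl fun x _ => ?_
    simp only [Matrix.mul_apply]
    rw [Finset.sum_comm]
    exact Finset.sum_congr rfl fun c _ => (Finset.mul_sum _ _ _).symm
  have h2 : ∀ c : Fin d, ∑ y, B c y ≤ matNorm B := fun c =>
    Finset.single_le_sum (fun c' _ => Finset.sum_nonneg fun y _ => hB c' y)
      (Finset.mem_univ c)
  rw [h1]
  calc ∑ x, ∑ c, A x c * ∑ y, B c y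
      ≤ ∑ x, ∑ c, A x c * matNorm B := by
        refine Finset.sum_le_sum fun x _ => Finset.sum_le_sum fun c _ => ?_
        exact mul_le_mul_of_nonneg_left (h2 c) (hA x c)
    _ = matNorm A * matNorm B := by
        simp only [matNorm, Finset.sum_mul]

lemma pow_entry_nonneg {H : Matrix (Fin d) (Fin d) ℝ} (h : ∀ a b, 0 ≤ H a b) :
    ∀ k : ℕ, ∀ a b, 0 ≤ (H ^ k) a b := by
  intro k
  induction k with
  | zero => intro a b; simp [Matrix.one_apply]; positivity
  | succ k ih =>
      intro a b
      rw [pow_succ, Matrix.mul_apply]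
      exact Finset.sum_nonneg fun c _ => mul_nonneg (ih a c) (h c b)

lemma fac_pos {A B : Matrix (Fin d) (Fin d) ℝ}
    (hA : ∀ a b, 0 ≤ A a b) (hB : ∀ a b, 0 ≤ B a b) {x y : Fin d}
    (h : 0 < (A * B) x y) : ∃ c, 0 < A x c ∧ 0 < B c y := by
  rw [Matrix.mul_apply] at h
  have h0 : ∑ c : Fin d, (0 : ℝ) < ∑ c, A x c * B c y := by simpa using h
  obtain ⟨c, -, hc⟩ := Finset.exists_lt_of_sum_lt h0
  refine ⟨c, ?_, ?_⟩
  · rcases (hA x c).lt_or_eq with h' | h'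
    · exact h'
    · exfalso; rw [← h'] at hc; simp at hc
  · rcases (hB c y).lt_or_eq with h' | h'
    · exact h'
    · exfalso; rw [← h'] at hc; simp at hc

lemma extract_word (hnn : ∀ i : Fin m, ∀ a b : Fin d, 0 ≤ M i a b) :
    ∀ k : ℕ, ∀ a b : Fin d, 0 < ((∑ i, M i) ^ k) a b →
      ∃ K : Fin k → Fin m, 0 < MprodW M K a b := by
  have hH : ∀ a b, 0 ≤ (∑ i, M i) a b := fun a b => by
    rw [Matrix.sum_apply]
    exact Finset.sum_nonneg fun i _ => hnn i a b
  intro k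
  induction k with
  | zero =>
      intro a b h
      rw [pow_zero] at h
      exact ⟨Fin.elim0, by rwa [MprodW_nil]⟩
  | succ k ih =>
      intro a b h
      rw [pow_succ'] at h
      obtain ⟨c, hac, hcb⟩ := fac_pos hH (pow_entry_nonneg hH k) h
      rw [Matrix.sum_apply] at hac
      have h0 : ∑ i : Fin m, (0 : ℝ) < ∑ i, M i a c := by simpa using hac
      obtain ⟨i, -, hi⟩ := Finset.exists_lt_of_sum_lt h0
      obtain ⟨K, hK⟩ := ih c b hcb
      refine ⟨Fin.cons i K, ?_⟩
      rw [MprodW_cons]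
      exact lt_of_lt_of_le (mul_pos hi hK)
        (entry_mul_le (hnn i) (MprodW_nonneg hnn K) a c b)

lemma append3_inj {n l k k' : ℕ} (hkk : k = k')
    {I I' : Fin n → Fin m} {J J' : Fin l → Fin m}
    {K : Fin k → Fin m} {K' : Fin k' → Fin m}
    (h : HEq (Fin.append (Fin.append I K) J) (Fin.append (Fin.append I' K') J')) :
    I = I' ∧ J = J' := by
  subst hkk
  have h' := eq_of_heq h
  constructor
  · funext a
    have := congrFun h' (Fin.castAdd l (Fin.castAdd k a))
    simpa [Fin.append_left] using this
  · funext j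
    have := congrFun h' (Fin.natAdd (n + k) j)
    simpa [Fin.append_right] using this

lemma sum_map_le {α β : Type*} (s : Finset α) (t : Finset β) (Φ : α → β)
    (f : α → ℝ) (g : β → ℝ) (hinj : Set.InjOn Φ s) (hmem : ∀ a ∈ s, Φ a ∈ t)
    (hle : ∀ a ∈ s, f a ≤ g (Φ a)) (hg : ∀ b ∈ t, 0 ≤ g b) :
    ∑ a ∈ s, f a ≤ ∑ b ∈ t, g b := by
  calc ∑ a ∈ s, f a ≤ ∑ a ∈ s, g (Φ a) := Finset.sum_le_sum hle
    _ = ∑ b ∈ s.image Φ, g b := (Finset.sum_image fun a ha a' ha' h =>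
        hinj ha ha' h).symm
    _ ≤ ∑ b ∈ t, g b := Finset.sum_le_sum_of_subset_of_nonneg
        (Finset.image_subset_iff.2 hmem) (fun b hb _ => hg b hb)


lemma gap_fekete (t : ℕ → ℝ) (r : ℕ) (hr : 1 ≤ r) (c : ℝ)
    (Hsup : ∀ n l : ℕ, 1 ≤ n → 1 ≤ l → t n + t l - c ≤ t (n + l + r)) :
    ∃ L : EReal, L ≠ ⊥ ∧
      Tendsto (fun n : ℕ => ((t n / n : ℝ) : EReal)) atTop (𝓝 L) := by
  set u : ℕ → EReal := fun n => ((t n / n : ℝ) : EReal) with hu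
  set L : EReal := liminf u atTop with hL
  -- key lower estimate on the liminf
  have key : ∀ N : ℕ, 1 ≤ N → (((t N - c) / ((N : ℝ) + r) : ℝ) : EReal) ≤ L := by
    intro N hN
    have hNr : (0:ℝ) < (N:ℝ) + r := by positivity
    -- iterated superadditivity
    have iter : ∀ j : ℕ, ∀ e : ℕ, 1 ≤ e →
        (j : ℝ) * (t N - c) + t e ≤ t (j * (N + r) + e) := by
      intro j
      induction j with
      | zero => intro e he; simp
      | succ j ih =>
          intro e he
          have h1 : 1 ≤ j * (N + r) + e := le_add_of_nonneg_of_le (Nat.zero_le _) he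
          have h2 := Hsup N (j * (N + r) + e) hN h1
          have h3 : N + (j * (N + r) + e) + r = (j + 1) * (N + r) + e := by ring
          rw [h3] at h2
          have h4 := ih e he
          push_cast
          push_cast at h4
          linarith
    -- a uniform lower bound for t on [1, N+r]
    obtain ⟨e0, he0mem, he0min⟩ :=
      (Finset.Icc 1 (N + r)).exists_min_image t (by
        refine ⟨1, ?_⟩; rw [Finset.mem_Icc]; omega)
    set B := t e0 with hB
    -- decomposition of n
    set jf : ℕ → ℕ := fun n => (n - 1) / (N + r) with hjf
    set ef : ℕ → ℕ := fun n => (n - 1) % (N + r) + 1 with hef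
    have hdec : ∀ n : ℕ, 1 ≤ n →
        n = jf n * (N + r) + ef n ∧ 1 ≤ ef n ∧ ef n ≤ N + r := by
      intro n hn
      simp only [hjf, hef]
      have h1 : (N + r) * ((n - 1) / (N + r)) + (n - 1) % (N + r) = n - 1 :=
        Nat.div_add_mod (n - 1) (N + r)
      have h2 : (n - 1) % (N + r) < N + r := Nat.mod_lt _ (by omega)
      have h3 : (n - 1) / (N + r) * (N + r) = (N + r) * ((n - 1) / (N + r)) :=
        Nat.mul_comm _ _
      refine ⟨by omega, by omega, by omega⟩
    have hlow : ∀ n : ℕ, 1 ≤ n → (jf n : ℝ) * (t N - c) + B ≤ t n := by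
      intro n hn
      obtain ⟨h1, h2, h3⟩ := hdec n hn
      have h4 := iter (jf n) (ef n) h2
      have h5 : B ≤ t (ef n) := he0min _ (by rw [Finset.mem_Icc]; omega)
      nth_rewrite 2 [h1]
      linarith
    -- the comparison sequence converges to (t N - c)/(N + r)
    have hetend : Tendsto (fun n : ℕ => (ef n : ℝ) / n) atTop (𝓝 0) := by
      refine squeeze_zero (fun n => by positivity) (fun n => ?_)
        (tendsto_const_div_atTop_nhds_zero_nat ((N:ℝ) + r))
      rcases Nat.eq_zero_or_pos n with h | h
      · simp [h]
      · have h3 := (hdec n h).2.2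
        have h4 : (ef n : ℝ) ≤ (N : ℝ) + r := by exact_mod_cast h3
        have h5 : (0:ℝ) < n := by exact_mod_cast h
        exact div_le_div_of_nonneg_right h4 h5.le
    have hjten : Tendsto (fun n : ℕ => (jf n : ℝ) / n) atTop (𝓝 (1 / ((N:ℝ) + r))) := by
      have heq : ∀ᶠ n : ℕ in atTop,
          (1 - (ef n : ℝ) / n) / ((N:ℝ) + r) = (jf n : ℝ) / n := by
        filter_upwards [eventually_ge_atTop 1] with n hn
        obtain ⟨h1, h2, h3⟩ := hdec n hn
        have hncast : (n : ℝ) = (jf n : ℝ) * ((N:ℝ) + r) + ef n := by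
          exact_mod_cast congrArg (Nat.cast : ℕ → ℝ) h1
        have hn0 : (0:ℝ) < n := by exact_mod_cast hn
        rw [div_eq_div_iff (ne_of_gt hNr) (ne_of_gt hn0), sub_mul, one_mul, div_mul_cancel₀ _ (ne_of_gt hn0)]
        linarith
      refine Tendsto.congr' heq ?_
      have h6 : Tendsto (fun n : ℕ => (1 - (ef n : ℝ) / n) / ((N:ℝ) + r)) atTop
          (𝓝 ((1 - 0) / ((N:ℝ) + r))) :=
        (tendsto_const_nhds.sub hetend).div_const _
      simpa using h6
    have hphi : Tendsto (fun n : ℕ => ((jf n : ℝ) / n) * (t N - c) + B / n) atTop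
        (𝓝 ((t N - c) / ((N:ℝ) + r))) := by
      have h7 := (hjten.mul_const (t N - c)).add (tendsto_const_div_atTop_nhds_zero_nat B)
      have h8 : 1 / ((N:ℝ) + r) * (t N - c) + 0 = (t N - c) / ((N:ℝ) + r) := by ring
      rw [h8] at h7
      exact h7
    -- compare liminfs
    have h1 : (fun n : ℕ => ((((jf n : ℝ) / n) * (t N - c) + B / n : ℝ) : EReal))
        ≤ᶠ[atTop] u := by
      filter_upwards [eventually_ge_atTop 1] with n hn
      have hn0 : (0:ℝ) < n := by exact_mod_cast hn
      simp only [hu]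
      rw [EReal.coe_le_coe_iff]
      have h2 := hlow n hn
      have h3 : (jf n : ℝ) / n * (t N - c) + B / n
          = ((jf n : ℝ) * (t N - c) + B) / n := by ring
      rw [h3]
      exact div_le_div_of_nonneg_right h2 hn0.le
    have h2 : liminf (fun n : ℕ =>
          ((((jf n : ℝ) / n) * (t N - c) + B / n : ℝ) : EReal)) atTop
        = (((t N - c) / ((N:ℝ) + r) : ℝ) : EReal) :=
      (EReal.tendsto_coe.2 hphi).liminf_eq
    rw [hL, ← h2]
    exact liminf_le_liminf h1
  have Lbot : L ≠ ⊥ := by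
    intro h
    have h1 := key 1 le_rfl
    rw [h] at h1
    exact (EReal.bot_lt_coe _).not_ge h1
  have hsup : limsup u atTop ≤ L := by
    by_contra hlt
    push_neg at hlt
    obtain ⟨x, hLx, hxls⟩ := EReal.exists_between_coe_real hlt
    have hxL : (x : EReal) ≤ L := by
      have hfreq : ∃ᶠ n in atTop, (x : EReal) < u n :=
        frequently_lt_of_lt_limsup (by isBoundedDefault) hxls
      have heps : ∀ ε : ℝ, 0 < ε → ((x - ε : ℝ) : EReal) ≤ L := by
        intro ε hε
        have htend : Tendsto (fun N : ℕ => (x * N - c) / ((N:ℝ) + r)) atTop (𝓝 x) := by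
          have h8 : ∀ᶠ N : ℕ in atTop,
              x - (x * r + c) / ((N:ℝ) + r) = (x * N - c) / ((N:ℝ) + r) := by
            filter_upwards [eventually_ge_atTop 1] with N hN
            have hN0 : (0:ℝ) < (N:ℝ) + r := by positivity
            field_simp
            ring
          refine Tendsto.congr' h8 ?_
          have h9 : Tendsto (fun N : ℕ => (x * r + c) / ((N:ℝ) + r)) atTop (𝓝 0) :=
            Tendsto.div_atTop tendsto_const_nhds
              (tendsto_atTop_add_const_right atTop (r:ℝ) tendsto_natCast_atTop_atTop)
          simpa using (tendsto_const_nhds.sub h9)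
        have hev : ∀ᶠ N : ℕ in atTop,
            x - ε ≤ (x * N - c) / ((N:ℝ) + r) :=
          htend.eventually (eventually_ge_nhds (by linarith))
        obtain ⟨N, hxu, hNge, hN1⟩ :=
          (hfreq.and_eventually (hev.and (eventually_ge_atTop 1))).exists
        have hN0 : (0:ℝ) < N := by exact_mod_cast hN1
        have hx : x < t N / N := by
          simp only [hu] at hxu
          exact_mod_cast hxu
        have h5 : x * N ≤ t N := le_of_lt ((lt_div_iff₀ hN0).1 hx)
        have h6 : (x - ε : ℝ) ≤ (t N - c) / ((N:ℝ) + r) := by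
          refine hNge.trans ?_
          have hNr : (0:ℝ) < (N:ℝ) + r := by positivity
          exact div_le_div_of_nonneg_right (by linarith) hNr.le
        calc ((x - ε : ℝ) : EReal) ≤ (((t N - c) / ((N:ℝ) + r) : ℝ) : EReal) := by
              exact_mod_cast h6
          _ ≤ L := key N hN1
      by_contra hxLlt
      push_neg at hxLlt
      obtain ⟨y, hLy, hyx⟩ := EReal.exists_between_coe_real hxLlt
      have hyx' : y < x := by exact_mod_cast hyx
      have h10 := heps (x - y) (by linarith)
      have h11 : ((x - (x - y) : ℝ) : EReal) = (y : ℝ) := by norm_num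
      rw [h11] at h10
      exact hLy.not_ge h10
    exact hLx.not_ge hxL
  refine ⟨L, Lbot, ?_⟩
  have hinf : liminf u atTop = L := hL.symm
  have hsup' : limsup u atTop = L :=
    le_antisymm hsup (hL ▸ liminf_le_limsup)
  exact tendsto_of_liminf_eq_limsup hinf hsup'

/-- Proposition 4.4: if `H = M_1 + ⋯ + M_m` is irreducible then for
every `q < 0` the limit `lim (1/n) log Σ_{J ∈ 𝒩_n} ‖M_J‖^q` exists in `ℝ ∪ {+∞}`. -/
theorem pressure_limit_exists_negative_q
    (m d : ℕ) (hm : 2 ≤ m) (hd : 1 ≤ d)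
    (M : Fin m → Matrix (Fin d) (Fin d) ℝ)
    (hnn : ∀ i : Fin m, ∀ a b : Fin d, 0 ≤ M i a b)
    (hirr : ∃ r : ℕ, 1 ≤ r ∧ ∀ a b : Fin d,
      0 < (∑ k ∈ Finset.Icc 1 r, (∑ i : Fin m, M i) ^ k) a b)
    (q : ℝ) (hq : q < 0) :
    ∃ L : EReal, L ≠ ⊥ ∧
      Tendsto (fun n : ℕ =>
          (((1 / (n : ℝ)) * Real.log
            (∑ J ∈ Finset.univ.filter (fun J : Fin n → Fin m => MprodW M J ≠ 0),
              matNorm (MprodW M J) ^ q) : ℝ) : EReal))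
        atTop (𝓝 L) := by
  obtain ⟨r, hr, hirr⟩ := hirr
  have hMn : ∀ {n : ℕ} (J : Fin n → Fin m) (a b : Fin d), 0 ≤ MprodW M J a b :=
    fun J a b => MprodW_nonneg hnn J a b
  -- choose a positive entry of every nonzero word product
  have hpick0 : ∀ (n : ℕ) (W : Fin n → Fin m), ∃ x a : Fin d,
      (MprodW M W ≠ 0 → 0 < MprodW M W x a) := by
    intro n W
    by_cases h : MprodW M W ≠ 0
    · obtain ⟨x, a, hx⟩ := exists_pos_entry (hMn W) h
      exact ⟨x, a, fun _ => hx⟩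
    · exact ⟨⟨0, hd⟩, ⟨0, hd⟩, fun h' => absurd h' h⟩
  choose pr pc hpick using hpick0
  -- connecting words
  have hconn : ∀ a b : Fin d, ∃ k : ℕ, (1 ≤ k ∧ k ≤ r) ∧
      ∃ K : Fin k → Fin m, 0 < MprodW M K a b := by
    intro a b
    have h1 := hirr a b
    rw [Matrix.sum_apply] at h1
    have h0 : ∑ k ∈ Finset.Icc 1 r, (0:ℝ)
        < ∑ k ∈ Finset.Icc 1 r, ((∑ i, M i) ^ k) a b := by simpa using h1
    obtain ⟨k, hk, hpos⟩ := Finset.exists_lt_of_sum_lt h0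
    rw [Finset.mem_Icc] at hk
    exact ⟨k, hk, extract_word hnn k a b hpos⟩
  choose kc hkc Kc hKc using hconn
  -- every row of H has a positive entry
  have hrow : ∀ a : Fin d, ∃ i c, 0 < M i a c := by
    intro a
    have h1 := hirr a ⟨0, hd⟩
    rw [Matrix.sum_apply] at h1
    have h0 : ∑ k ∈ Finset.Icc 1 r, (0:ℝ)
        < ∑ k ∈ Finset.Icc 1 r, ((∑ i, M i) ^ k) a ⟨0, hd⟩ := by simpa using h1
    obtain ⟨k, hk, hpos⟩ := Finset.exists_lt_of_sum_lt h0
    rw [Finset.mem_Icc] at hk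
    have hH : ∀ a b, 0 ≤ (∑ i, M i) a b := fun a b => by
      rw [Matrix.sum_apply]; exact Finset.sum_nonneg fun i _ => hnn i a b
    obtain ⟨k', rfl⟩ : ∃ k', k = k' + 1 := ⟨k - 1, by omega⟩
    rw [pow_succ'] at hpos
    obtain ⟨c, hac, -⟩ := fac_pos hH (pow_entry_nonneg hH k') hpos
    rw [Matrix.sum_apply] at hac
    have h2 : ∑ i : Fin m, (0:ℝ) < ∑ i, M i a c := by simpa using hac
    obtain ⟨i, -, hi⟩ := Finset.exists_lt_of_sum_lt h2
    exact ⟨i, c, hi⟩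
  -- extension by a single letter
  have hext0 : ∀ (n : ℕ) (W : Fin n → Fin m), ∃ i : Fin m,
      (MprodW M W ≠ 0 → MprodW M (Fin.append W ![i]) ≠ 0) := by
    intro n W
    by_cases h : MprodW M W ≠ 0
    · have hx := hpick n W h
      obtain ⟨i, c, hic⟩ := hrow (pc n W)
      refine ⟨i, fun _ => ?_⟩
      rw [MprodW_append, MprodW_single]
      exact ne_zero_of_pos_entry
        (lt_of_lt_of_le (mul_pos hx hic) (entry_mul_le (hMn W) (hnn i) _ _ _))
    · exact ⟨⟨0, by omega⟩, fun h' => absurd h' h⟩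
  choose ext hext using hext0
  -- the partition function
  set s : ℕ → ℝ := fun n =>
    ∑ J ∈ Finset.univ.filter (fun J : Fin n → Fin m => MprodW M J ≠ 0),
      matNorm (MprodW M J) ^ q with hs
  have hNne : ∀ n : ℕ, ∃ J : Fin n → Fin m, MprodW M J ≠ 0 := by
    intro n
    induction n with
    | zero =>
        refine ⟨Fin.elim0, ?_⟩
        rw [MprodW_nil]
        intro h
        have h2 := congrFun (congrFun h ⟨0, hd⟩) ⟨0, hd⟩
        simp [Matrix.one_apply] at h2
    | succ n ih =>
        obtain ⟨J, hJ⟩ := ih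
        exact ⟨Fin.append J ![ext n J], hext n J hJ⟩
  have hterm_pos : ∀ {n : ℕ} {J : Fin n → Fin m}, MprodW M J ≠ 0 →
      0 < matNorm (MprodW M J) ^ q :=
    fun hJ => Real.rpow_pos_of_pos (matNorm_pos (hMn _) hJ) q
  have hs_pos : ∀ n, 0 < s n := by
    intro n
    obtain ⟨J, hJ⟩ := hNne n
    refine Finset.sum_pos' (fun J' hJ' => (hterm_pos (Finset.mem_filter.1 hJ').2).le)
      ⟨J, Finset.mem_filter.2 ⟨Finset.mem_univ _, hJ⟩, hterm_pos hJ⟩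
  -- constants
  set C : ℝ := 1 + ∑ i, matNorm (M i) with hC
  have hC1 : 1 ≤ C := by
    rw [hC]
    have : 0 ≤ ∑ i, matNorm (M i) :=
      Finset.sum_nonneg fun i _ => matNorm_nonneg (hnn i)
    linarith
  have hCi : ∀ i, matNorm (M i) ≤ C := by
    intro i
    rw [hC]
    have h1 : matNorm (M i) ≤ ∑ i, matNorm (M i) :=
      Finset.single_le_sum (fun i _ => matNorm_nonneg (hnn i)) (Finset.mem_univ i)
    linarith
  set F : Fin d → Fin d → ℝ := fun a b => matNorm (MprodW M (Kc a b)) with hF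
  have hFnn : ∀ a b, 0 ≤ F a b := fun a b => matNorm_nonneg (hMn _)
  set Cr : ℝ := 1 + ∑ a, ∑ b, F a b with hCr
  have hCrsum : 0 ≤ ∑ a, ∑ b, F a b :=
    Finset.sum_nonneg fun a _ => Finset.sum_nonneg fun b _ => hFnn a b
  have hCr1 : 1 ≤ Cr := by rw [hCr]; linarith
  have hCrb : ∀ a b, F a b ≤ Cr := by
    intro a b
    have h1 : F a b ≤ ∑ b', F a b' :=
      Finset.single_le_sum (fun b' _ => hFnn a b') (Finset.mem_univ b)
    have h2 : ∑ b', F a b' ≤ ∑ a', ∑ b', F a' b' :=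
      Finset.single_le_sum (fun a' _ => Finset.sum_nonneg fun b' _ => hFnn a' b')
        (Finset.mem_univ a)
    rw [hCr]
    linarith
  -- one-step lower bound
  set c0 : ℝ := C ^ q with hc0
  have hc0pos : 0 < c0 := Real.rpow_pos_of_pos (by linarith) q
  have hc0le1 : c0 ≤ 1 := Real.rpow_le_one_of_one_le_of_nonpos hC1 hq.le
  have step : ∀ n : ℕ, c0 * s n ≤ s (n + 1) := by
    intro n
    have h1 : c0 * s n = ∑ J ∈ Finset.univ.filter
        (fun J : Fin n → Fin m => MprodW M J ≠ 0),
        c0 * matNorm (MprodW M J) ^ q := by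
      rw [hs, Finset.mul_sum]
    rw [h1, hs]
    refine sum_map_le _ _ (fun J => Fin.append J ![ext n J]) _ _ ?_ ?_ ?_ ?_
    · intro J hJ J' hJ' h
      funext a
      have h2 := congrFun h (Fin.castAdd 1 a)
      simpa [Fin.append_left] using h2
    · intro J hJ
      rw [Finset.mem_filter] at hJ ⊢
      exact ⟨Finset.mem_univ _, hext n J hJ.2⟩
    · intro J hJ
      rw [Finset.mem_filter] at hJ
      have hJne := hJ.2
      have hWne := hext n J hJne
      have e1 : MprodW M (Fin.append J ![ext n J]) = MprodW M J * M (ext n J) := by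
        rw [MprodW_append, MprodW_single]
      have hb : matNorm (MprodW M (Fin.append J ![ext n J]))
          ≤ matNorm (MprodW M J) * C := by
        rw [e1]
        exact (matNorm_mul_le (hMn J) (hnn _)).trans
          (mul_le_mul_of_nonneg_left (hCi _) (matNorm_nonneg (hMn J)))
      have hWpos : 0 < matNorm (MprodW M (Fin.append J ![ext n J])) :=
        matNorm_pos (hMn _) hWne
      have h3 : (matNorm (MprodW M J) * C) ^ q
          ≤ matNorm (MprodW M (Fin.append J ![ext n J])) ^ q :=
        Real.rpow_le_rpow_of_nonpos hWpos hb hq.le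
      have h4 : (matNorm (MprodW M J) * C) ^ q
          = matNorm (MprodW M J) ^ q * c0 := by
        rw [Real.mul_rpow (matNorm_nonneg (hMn J)) (by linarith : (0:ℝ) ≤ C), hc0]
      rw [h4] at h3
      calc c0 * matNorm (MprodW M J) ^ q
          = matNorm (MprodW M J) ^ q * c0 := by ring
        _ ≤ _ := h3
    · intro W hW
      exact Real.rpow_nonneg (matNorm_nonneg (hMn _)) q
  have step_iter : ∀ n e : ℕ, c0 ^ e * s n ≤ s (n + e) := by
    intro n e
    induction e with
    | zero => simp
    | succ e ih =>
        calc c0 ^ (e + 1) * s n = c0 * (c0 ^ e * s n) := by ring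
          _ ≤ c0 * s (n + e) := mul_le_mul_of_nonneg_left ih hc0pos.le
          _ ≤ s (n + e + 1) := step (n + e)
  -- gluing claim
  set cR : ℝ := Cr ^ q with hcR
  have hcRpos : 0 < cR := Real.rpow_pos_of_pos (by linarith) q
  have claimA : ∀ n l : ℕ, cR * (s n * s l) ≤ ∑ k ∈ Finset.Icc 1 r, s (n + k + l) := by
    intro n l
    -- right-hand side as a sum over a sigma type
    have hsig : ∑ k ∈ Finset.Icc 1 r, s (n + k + l)
        = ∑ p ∈ (Finset.Icc 1 r).sigma (fun k =>
            Finset.univ.filter (fun W : Fin (n + k + l) → Fin m => MprodW M W ≠ 0)),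
          matNorm (MprodW M p.2) ^ q := by
      rw [Finset.sum_sigma]
    -- left-hand side as a sum over pairs
    have hprod : cR * (s n * s l)
        = ∑ p ∈ (Finset.univ.filter (fun J : Fin n → Fin m => MprodW M J ≠ 0)) ×ˢ
            (Finset.univ.filter (fun J : Fin l → Fin m => MprodW M J ≠ 0)),
          cR * (matNorm (MprodW M p.1) ^ q * matNorm (MprodW M p.2) ^ q) := by
      rw [Finset.sum_product, hs]
      rw [Finset.sum_mul_sum]
      rw [Finset.mul_sum]
      refine Finset.sum_congr rfl fun I _ => ?_
      rw [Finset.mul_sum]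
    rw [hsig, hprod]
    refine sum_map_le _ _ (fun p => ⟨kc (pc n p.1) (pr l p.2),
        Fin.append (Fin.append p.1 (Kc (pc n p.1) (pr l p.2))) p.2⟩) _ _ ?_ ?_ ?_ ?_
    · -- injectivity
      intro p hp p' hp' h
      have h1 : kc (pc n p.1) (pr l p.2) = kc (pc n p'.1) (pr l p'.2) :=
        congrArg Sigma.fst h
      rw [Sigma.mk.inj_iff] at h
      obtain ⟨hIJ1, hIJ2⟩ := append3_inj h1 h.2
      exact Prod.ext hIJ1 hIJ2
    · -- membership
      intro p hp
      rw [Finset.mem_product, Finset.mem_filter, Finset.mem_filter] at hp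
      obtain ⟨⟨-, hI⟩, ⟨-, hJ⟩⟩ := hp
      rw [Finset.mem_sigma, Finset.mem_Icc]
      refine ⟨(hkc _ _), ?_⟩
      rw [Finset.mem_filter]
      refine ⟨Finset.mem_univ _, ?_⟩
      have hxa := hpick n p.1 hI
      have hby := hpick l p.2 hJ
      have hK := hKc (pc n p.1) (pr l p.2)
      rw [MprodW_append]
      have h2 : 0 < MprodW M (Fin.append p.1 (Kc (pc n p.1) (pr l p.2)))
          (pr n p.1) (pr l p.2) := by
        rw [MprodW_append]
        exact lt_of_lt_of_le (mul_pos hxa hK) (entry_mul_le (hMn _) (hMn _) _ _ _)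
      exact ne_zero_of_pos_entry
        (lt_of_lt_of_le (mul_pos h2 hby) (entry_mul_le (hMn _) (hMn _) _ _ _))
    · -- the term inequality
      intro p hp
      rw [Finset.mem_product, Finset.mem_filter, Finset.mem_filter] at hp
      obtain ⟨⟨-, hI⟩, ⟨-, hJ⟩⟩ := hp
      have hxa := hpick n p.1 hI
      have hby := hpick l p.2 hJ
      have hK := hKc (pc n p.1) (pr l p.2)
      set W := Fin.append (Fin.append p.1 (Kc (pc n p.1) (pr l p.2))) p.2 with hW
      have hWne : MprodW M W ≠ 0 := by
        rw [hW, MprodW_append]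
        have h2 : 0 < MprodW M (Fin.append p.1 (Kc (pc n p.1) (pr l p.2)))
            (pr n p.1) (pr l p.2) := by
          rw [MprodW_append]
          exact lt_of_lt_of_le (mul_pos hxa hK) (entry_mul_le (hMn _) (hMn _) _ _ _)
        exact ne_zero_of_pos_entry
          (lt_of_lt_of_le (mul_pos h2 hby) (entry_mul_le (hMn _) (hMn _) _ _ _))
      have hbound : matNorm (MprodW M W)
          ≤ matNorm (MprodW M p.1) * Cr * matNorm (MprodW M p.2) := by
        rw [hW, MprodW_append]
        refine (matNorm_mul_le (hMn _) (hMn _)).trans ?_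
        refine mul_le_mul_of_nonneg_right ?_ (matNorm_nonneg (hMn _))
        rw [MprodW_append]
        refine (matNorm_mul_le (hMn _) (hMn _)).trans ?_
        exact mul_le_mul_of_nonneg_left (hCrb _ _) (matNorm_nonneg (hMn _))
      have hWpos : 0 < matNorm (MprodW M W) := matNorm_pos (hMn _) hWne
      have h3 : (matNorm (MprodW M p.1) * Cr * matNorm (MprodW M p.2)) ^ q
          ≤ matNorm (MprodW M W) ^ q :=
        Real.rpow_le_rpow_of_nonpos hWpos hbound hq.le
      have h4 : (matNorm (MprodW M p.1) * Cr * matNorm (MprodW M p.2)) ^ q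
          = cR * (matNorm (MprodW M p.1) ^ q * matNorm (MprodW M p.2) ^ q) := by
        rw [Real.mul_rpow (mul_nonneg (matNorm_nonneg (hMn _)) (by linarith))
            (matNorm_nonneg (hMn _)),
          Real.mul_rpow (matNorm_nonneg (hMn _)) (by linarith : (0:ℝ) ≤ Cr), hcR]
        ring
      rw [h4] at h3
      exact h3
    · intro b hb
      exact Real.rpow_nonneg (matNorm_nonneg (hMn _)) q
  -- combined superadditivity with gap r
  have hr0 : (0:ℝ) < r := by exact_mod_cast hr
  set c3 : ℝ := cR * c0 ^ r / r with hc3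
  have hc3pos : 0 < c3 :=
    div_pos (mul_pos hcRpos (pow_pos hc0pos r)) hr0
  have claimB : ∀ n l : ℕ, c3 * (s n * s l) ≤ s (n + l + r) := by
    intro n l
    have h1 : ∀ k ∈ Finset.Icc 1 r, s (n + k + l) ≤ s (n + l + r) / c0 ^ r := by
      intro k hk
      rw [Finset.mem_Icc] at hk
      have h2 : c0 ^ (r - k) * s (n + k + l) ≤ s (n + k + l + (r - k)) :=
        step_iter _ _
      have h3 : n + k + l + (r - k) = n + l + r := by omega
      rw [h3] at h2
      have h4 : c0 ^ r ≤ c0 ^ (r - k) :=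
        pow_le_pow_of_le_one hc0pos.le hc0le1 (by omega)
      rw [le_div_iff₀ (pow_pos hc0pos r)]
      calc s (n + k + l) * c0 ^ r ≤ c0 ^ (r - k) * s (n + k + l) := by
            rw [mul_comm]
            exact mul_le_mul_of_nonneg_right h4 (hs_pos _).le
        _ ≤ s (n + l + r) := h2
    have h5 := claimA n l
    have h6 : ∑ k ∈ Finset.Icc 1 r, s (n + k + l)
        ≤ (r : ℝ) * (s (n + l + r) / c0 ^ r) := by
      calc ∑ k ∈ Finset.Icc 1 r, s (n + k + l)
          ≤ ∑ _k ∈ Finset.Icc 1 r, s (n + l + r) / c0 ^ r := Finset.sum_le_sum h1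
        _ = (r : ℝ) * (s (n + l + r) / c0 ^ r) := by
            rw [Finset.sum_const, Nat.card_Icc]
            simp [nsmul_eq_mul]
    have h7 : cR * (s n * s l) ≤ (r : ℝ) * (s (n + l + r) / c0 ^ r) := h5.trans h6
    rw [hc3, div_mul_eq_mul_div, div_le_iff₀ hr0]
    calc cR * c0 ^ r * (s n * s l) = c0 ^ r * (cR * (s n * s l)) := by ring
      _ ≤ c0 ^ r * ((r : ℝ) * (s (n + l + r) / c0 ^ r)) :=
          mul_le_mul_of_nonneg_left h7 (pow_pos hc0pos r).le
      _ = s (n + l + r) * r := by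
          field_simp
  -- superadditivity of the logarithms
  have Hsup : ∀ n l : ℕ, 1 ≤ n → 1 ≤ l →
      Real.log (s n) + Real.log (s l) - (-Real.log c3) ≤ Real.log (s (n + l + r)) := by
    intro n l _ _
    have h1 := claimB n l
    have h2 : Real.log (c3 * (s n * s l)) ≤ Real.log (s (n + l + r)) :=
      Real.log_le_log (mul_pos hc3pos (mul_pos (hs_pos n) (hs_pos l))) h1
    rw [Real.log_mul hc3pos.ne' (mul_pos (hs_pos n) (hs_pos l)).ne',
      Real.log_mul (hs_pos n).ne' (hs_pos l).ne'] at h2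
    linarith
  obtain ⟨L, hLbot, hLtend⟩ :=
    gap_fekete (fun n => Real.log (s n)) r hr (-Real.log c3) Hsup
  refine ⟨L, hLbot, ?_⟩
  have hfun : (fun n : ℕ =>
      (((1 / (n : ℝ)) * Real.log
        (∑ J ∈ Finset.univ.filter (fun J : Fin n → Fin m => MprodW M J ≠ 0),
          matNorm (MprodW M J) ^ q) : ℝ) : EReal))
      = fun n : ℕ => ((Real.log (s n) / n : ℝ) : EReal) := by
    funext n
    congr 1
    rw [hs]
    ring
  rw [hfun]
  exact hLtend
end Aux
end
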